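/- For the TRIP-Stern sequence for (e,e,12), the level sums satisfy S(n) = 2·S(n−1) + 2·S(n−2) for all n ≥ 2, and are given in closed form by S(n) = (1/6)·((9 − 5√3)(1 − √3)ⁿ + (9 + 5√3)(1 + √3)ⁿ) for all n ≥ 0 (as an identity of real numbers). -/

import Mathlib

/-- `f₀(a,b,c) = (b,c,a+c)` for the triplet `(e,e,12)`. -/
def f0 (p : ℤ × ℤ × ℤ) : ℤ × ℤ × ℤ := (p.2.1, p.2.2, p.1 + p.2.2)

/-- `f₁(a,b,c) = (b,a,a+c)` for the triplet `(e,e,12)`. -/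
def f1 (p : ℤ × ℤ × ℤ) : ℤ × ℤ × ℤ := (p.2.1, p.1, p.1 + p.2.2)

/-- One step of the TRIP-Stern tree: apply `f₁` on a `true` and `f₀` on a `false`. -/
def step (p : ℤ × ℤ × ℤ) (i : Bool) : ℤ × ℤ × ℤ := if i then f1 p else f0 p

/-- `Δ(v) = f_{iₙ}(⋯ f_{i₁}(1,1,1) ⋯)`, applying `f_{i₁}` first. -/
def delta (v : List Bool) : ℤ × ℤ × ℤ := v.foldl step (1, 1, 1)

/-- `S n` is the sum of all three coordinates of all `2ⁿ` level-`n` triples. -/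
def S (n : ℕ) : ℤ :=
  ∑ v : Fin n → Bool,
    ((delta (List.ofFn v)).1 + (delta (List.ofFn v)).2.1 + (delta (List.ofFn v)).2.2)

/-!
Write `Kg(p) = g(f₀ p) + g(f₁ p)` for the sum of `g` over the two children of `p`; summing `g`
over level `n + 1` is summing `Kg` over level `n`. For `T(a,b,c) = a + b + c` one computes
`KT = 3a + 2b + 3c` and `K²T = 8a + 6b + 8c = 2 KT + 2 T` pointwise, which gives the recurrence
after summing over level `n`. The closed form is the solution of `u (n+2) = 2 u (n+1) + 2 u n`,
whose characteristic roots are `1 ± √3`, with `u 0 = 3` and `u 1 = 8`.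
-/

open Finset

def levelSum (g : ℤ × ℤ × ℤ → ℤ) (n : ℕ) : ℤ := ∑ v : Fin n → Bool, g (delta (List.ofFn v))

def childSum (g : ℤ × ℤ × ℤ → ℤ) (p : ℤ × ℤ × ℤ) : ℤ := g (f0 p) + g (f1 p)

def coordSum (p : ℤ × ℤ × ℤ) : ℤ := p.1 + p.2.1 + p.2.2

lemma S_eq_levelSum (n : ℕ) : S n = levelSum coordSum n := rfl

lemma delta_ofFn_snoc {n : ℕ} (v : Fin n → Bool) (b : Bool) :
    delta (List.ofFn (Fin.snoc v b : Fin (n + 1) → Bool)) = step (delta (List.ofFn v)) b := by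
  simp only [List.ofFn_succ', Fin.snoc_castSucc, Fin.snoc_last, List.concat_eq_append, delta,
    List.foldl_append]
  rfl

lemma levelSum_succ (g : ℤ × ℤ × ℤ → ℤ) (n : ℕ) :
    levelSum g (n + 1) = levelSum (childSum g) n := by
  rw [levelSum, ← (Fin.snocEquiv fun _ => Bool).sum_comp, Fintype.sum_prod_type_right]
  refine sum_congr rfl fun v _ => ?_
  rw [Fintype.sum_bool, add_comm]
  exact congrArg₂ (· + ·) (congrArg g (delta_ofFn_snoc v false))
    (congrArg g (delta_ofFn_snoc v true))

lemma childSum_childSum_coordSum (p : ℤ × ℤ × ℤ) :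
    childSum (childSum coordSum) p = 2 * childSum coordSum p + 2 * coordSum p := by
  simp only [childSum, coordSum, f0, f1]
  ring

lemma S_add_two (n : ℕ) : S (n + 2) = 2 * S (n + 1) + 2 * S n := by
  simp only [S_eq_levelSum, levelSum_succ]
  simp only [levelSum, childSum_childSum_coordSum, sum_add_distrib, mul_sum]

lemma S_zero : S 0 = 3 := by decide

lemma S_one : S 1 = 8 := by decide

def sternRec : LinearRecurrence ℝ := ⟨2, ![2, 2]⟩

lemma sternRec_isSolution_iff (u : ℕ → ℝ) :
    sternRec.IsSolution u ↔ ∀ n, u (n + 2) = 2 * u (n + 1) + 2 * u n := by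
  show (∀ n, u (n + 2) = ∑ i : Fin 2, ![2, 2] i * u (n + i)) ↔ _
  simp only [Fin.sum_univ_two, Matrix.cons_val_zero, Matrix.cons_val_one, Fin.val_zero, Fin.val_one,
    add_zero]
  exact forall_congr' fun n => by rw [add_comm (2 * u n)]

/-- For the TRIP-Stern sequence for `(e,e,12)`, the level sums satisfy
`S(n) = 2·S(n−1) + 2·S(n−2)` for all `n ≥ 2`, and are given in closed form by
`S(n) = (1/6)·((9 − 5√3)(1 − √3)ⁿ + (9 + 5√3)(1 + √3)ⁿ)` for all `n ≥ 0`. -/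
theorem levelSum_e_e_12 :
    (∀ n : ℕ, 2 ≤ n → S n = 2 * S (n - 1) + 2 * S (n - 2)) ∧
    (∀ n : ℕ, (S n : ℝ) =
      (1 / 6) * ((9 - 5 * Real.sqrt 3) * (1 - Real.sqrt 3) ^ n
        + (9 + 5 * Real.sqrt 3) * (1 + Real.sqrt 3) ^ n)) := by
  refine ⟨fun n hn => ?_, fun n => ?_⟩
  · obtain ⟨m, rfl⟩ := Nat.exists_eq_add_of_le' hn
    simpa using S_add_two m
  have hs : Real.sqrt 3 ^ 2 = 3 := Real.sq_sqrt (by norm_num)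
  have hS : sternRec.IsSolution fun n => (S n : ℝ) :=
    (sternRec_isSolution_iff _).2 fun n => by exact_mod_cast S_add_two n
  have hclosed : sternRec.IsSolution fun n => (1 / 6 : ℝ) * ((9 - 5 * Real.sqrt 3) *
      (1 - Real.sqrt 3) ^ n + (9 + 5 * Real.sqrt 3) * (1 + Real.sqrt 3) ^ n) :=
    (sternRec_isSolution_iff _).2 fun n => by
      linear_combination (1 / 6 : ℝ) * ((9 - 5 * Real.sqrt 3) * (1 - Real.sqrt 3) ^ n
        + (9 + 5 * Real.sqrt 3) * (1 + Real.sqrt 3) ^ n) * hs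
  refine congrFun ((sternRec.eq_iff_eqOn_range_order _ _ hS hclosed).2 fun k hk => ?_) n
  have hk : k < 2 := mem_range.1 hk
  interval_cases k
  · simp only [S_zero, pow_zero]
    norm_num
  · simp only [S_one, pow_one]
    linear_combination (-5 / 3 : ℝ) * hs
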